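/- arXiv:1410.4952 — 2 statements merged into one kernel-verified Lean document; each statement's English description precedes it below -/
import Mathlib

section
/- Let γ > 1, a₀ > 0, and 0 < m ≤ M. There exist constants 0 < c ≤ C (depending only on a₀, γ, m, M) such that for every r ∈ [m, M] and every ρ ≥ 0: if |ρ - r| ≤ 1 then c|ρ - r|² ≤ H(ρ; r) ≤ C|ρ - r|², and if |ρ - r| ≥ 1 then c|ρ - r|^γ ≤ H(ρ; r) ≤ C|ρ - r|^γ, where H(ρ; r) = H(ρ) - H(r) - H'(r)(ρ - r) and H(ρ) = a₀ρ^γ/(γ-1). -/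
noncomputable def Hfun (a₀ γ ρ : ℝ) : ℝ := a₀ * ρ ^ γ / (γ - 1)
noncomputable def Hder (a₀ γ r : ℝ) : ℝ := a₀ * γ * r ^ (γ - 1) / (γ - 1)
noncomputable def relH (a₀ γ ρ r : ℝ) : ℝ :=
  Hfun a₀ γ ρ - Hfun a₀ γ r - Hder a₀ γ r * (ρ - r)

open Real

section Aux

lemma rpow_le_max' {a b t e : ℝ} (ha : 0 < a) (hat : a ≤ t) (htb : t ≤ b) :
    t ^ e ≤ max (a ^ e) (b ^ e) := by
  rcases le_total 0 e with he | he
  · exact le_max_of_le_right (Real.rpow_le_rpow (ha.le.trans hat) htb he)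
  · exact le_max_of_le_left (Real.rpow_le_rpow_of_nonpos ha hat he)

lemma min_le_rpow' {a b t e : ℝ} (ha : 0 < a) (hat : a ≤ t) (htb : t ≤ b) :
    min (a ^ e) (b ^ e) ≤ t ^ e := by
  rcases le_total 0 e with he | he
  · exact min_le_of_left_le (Real.rpow_le_rpow ha.le hat he)
  · exact min_le_of_right_le (Real.rpow_le_rpow_of_nonpos (ha.trans_le hat) htb he)

lemma tangent_ge {p s t : ℝ} (hp : 1 ≤ p) (hs : 0 ≤ s) (ht : 0 < t) :
    t ^ p + p * t ^ (p - 1) * (s - t) ≤ s ^ p := by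
  have hst : -1 ≤ s / t - 1 := by
    have : 0 ≤ s / t := div_nonneg hs ht.le
    linarith
  have h := one_add_mul_self_le_rpow_one_add hst hp
  rw [show (1 : ℝ) + (s / t - 1) = s / t by ring, Real.div_rpow hs ht.le] at h
  have htp : 0 < t ^ p := Real.rpow_pos_of_pos ht p
  have h3 : (1 + p * (s / t - 1)) * t ^ p ≤ s ^ p := by
    rw [← le_div_iff₀ htp]; exact h
  have h2 : t ^ (p - 1) = t ^ p / t := by rw [Real.rpow_sub ht, Real.rpow_one]
  have ht' : t ≠ 0 := ht.ne'
  calc t ^ p + p * t ^ (p - 1) * (s - t) = (1 + p * (s / t - 1)) * t ^ p := by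
        rw [h2]; field_simp
    _ ≤ s ^ p := h3

lemma tangent_le {p s t : ℝ} (hp0 : 0 ≤ p) (hp : p ≤ 1) (hs : 0 ≤ s) (ht : 0 < t) :
    s ^ p ≤ t ^ p + p * t ^ (p - 1) * (s - t) := by
  have hst : -1 ≤ s / t - 1 := by
    have : 0 ≤ s / t := div_nonneg hs ht.le
    linarith
  have h := rpow_one_add_le_one_add_mul_self hst hp0 hp
  rw [show (1 : ℝ) + (s / t - 1) = s / t by ring, Real.div_rpow hs ht.le] at h
  have htp : 0 < t ^ p := Real.rpow_pos_of_pos ht p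
  have h3 : s ^ p ≤ (1 + p * (s / t - 1)) * t ^ p := by
    rw [← div_le_iff₀ htp]; exact h
  have h2 : t ^ (p - 1) = t ^ p / t := by rw [Real.rpow_sub ht, Real.rpow_one]
  have ht' : t ≠ 0 := ht.ne'
  calc s ^ p ≤ (1 + p * (s / t - 1)) * t ^ p := h3
    _ = t ^ p + p * t ^ (p - 1) * (s - t) := by rw [h2]; field_simp

/-- Lipschitz bounds for `t^p - 1` on `[1, b]`. -/
lemma lip_ge {p b t : ℝ} (hp : 0 < p) (ht : 1 ≤ t) (htb : t ≤ b) :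
    p * min 1 (b ^ (p - 1)) * (t - 1) ≤ t ^ p - 1 ∧
      t ^ p - 1 ≤ p * max 1 (b ^ (p - 1)) * (t - 1) := by
  have ht0 : 0 < t := lt_of_lt_of_le one_pos ht
  have ht1 : 0 ≤ t - 1 := by linarith
  rcases le_total 1 p with h1p | hp1
  · constructor
    · have h := one_add_mul_self_le_rpow_one_add (s := t - 1) (by linarith) h1p
      rw [show (1 : ℝ) + (t - 1) = t by ring] at h
      have hmin : min 1 (b ^ (p - 1)) ≤ 1 := min_le_left _ _
      have := mul_le_mul_of_nonneg_right
        (mul_le_mul_of_nonneg_left hmin hp.le) ht1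
      nlinarith
    · have h := tangent_ge h1p zero_le_one ht0
      rw [Real.one_rpow] at h
      have hle : t ^ (p - 1) ≤ b ^ (p - 1) := Real.rpow_le_rpow ht0.le htb (by linarith)
      have hmax : b ^ (p - 1) ≤ max 1 (b ^ (p - 1)) := le_max_right _ _
      have key : p * (t ^ (p - 1)) * (t - 1) ≤ p * max 1 (b ^ (p - 1)) * (t - 1) :=
        mul_le_mul_of_nonneg_right
          (mul_le_mul_of_nonneg_left (hle.trans hmax) hp.le) ht1
      nlinarith
  · constructor
    · have h := tangent_le hp.le hp1 zero_le_one ht0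
      rw [Real.one_rpow] at h
      have hle : b ^ (p - 1) ≤ t ^ (p - 1) :=
        Real.rpow_le_rpow_of_nonpos ht0 htb (by linarith)
      have hmin : min 1 (b ^ (p - 1)) ≤ b ^ (p - 1) := min_le_right _ _
      have key : p * min 1 (b ^ (p - 1)) * (t - 1) ≤ p * (t ^ (p - 1)) * (t - 1) :=
        mul_le_mul_of_nonneg_right
          (mul_le_mul_of_nonneg_left (hmin.trans hle) hp.le) ht1
      nlinarith
    · have h := rpow_one_add_le_one_add_mul_self (s := t - 1) (by linarith) hp.le hp1
      rw [show (1 : ℝ) + (t - 1) = t by ring] at h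
      have hmax : (1 : ℝ) ≤ max 1 (b ^ (p - 1)) := le_max_left _ _
      have := mul_le_mul_of_nonneg_right
        (mul_le_mul_of_nonneg_left hmax hp.le) ht1
      nlinarith

/-- Lipschitz bounds for `1 - t^p` on `[a, 1]`. -/
lemma lip_le {p a t : ℝ} (hp : 0 < p) (ha : 0 < a) (hat : a ≤ t) (ht : t ≤ 1) :
    p * min 1 (a ^ (p - 1)) * (1 - t) ≤ 1 - t ^ p ∧
      1 - t ^ p ≤ p * max 1 (a ^ (p - 1)) * (1 - t) := by
  have ht0 : 0 < t := ha.trans_le hat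
  have ht1 : 0 ≤ 1 - t := by linarith
  rcases le_total 1 p with h1p | hp1
  · constructor
    · have h := tangent_ge h1p zero_le_one ht0
      rw [Real.one_rpow] at h
      have hle : a ^ (p - 1) ≤ t ^ (p - 1) := Real.rpow_le_rpow ha.le hat (by linarith)
      have hmin : min 1 (a ^ (p - 1)) ≤ a ^ (p - 1) := min_le_right _ _
      have key : p * min 1 (a ^ (p - 1)) * (1 - t) ≤ p * (t ^ (p - 1)) * (1 - t) :=
        mul_le_mul_of_nonneg_right
          (mul_le_mul_of_nonneg_left (hmin.trans hle) hp.le) ht1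
      nlinarith
    · have h := one_add_mul_self_le_rpow_one_add (s := t - 1) (by linarith) h1p
      rw [show (1 : ℝ) + (t - 1) = t by ring] at h
      have hmax : (1 : ℝ) ≤ max 1 (a ^ (p - 1)) := le_max_left _ _
      have := mul_le_mul_of_nonneg_right
        (mul_le_mul_of_nonneg_left hmax hp.le) ht1
      nlinarith
  · constructor
    · have h := rpow_one_add_le_one_add_mul_self (s := t - 1) (by linarith) hp.le hp1
      rw [show (1 : ℝ) + (t - 1) = t by ring] at h
      have hmin : min 1 (a ^ (p - 1)) ≤ 1 := min_le_left _ _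
      have := mul_le_mul_of_nonneg_right
        (mul_le_mul_of_nonneg_left hmin hp.le) ht1
      nlinarith
    · have h := tangent_le hp.le hp1 zero_le_one ht0
      rw [Real.one_rpow] at h
      have hle : t ^ (p - 1) ≤ a ^ (p - 1) :=
        Real.rpow_le_rpow_of_nonpos ha hat (by linarith)
      have hmax : a ^ (p - 1) ≤ max 1 (a ^ (p - 1)) := le_max_right _ _
      have key : p * (t ^ (p - 1)) * (1 - t) ≤ p * max 1 (a ^ (p - 1)) * (1 - t) :=
        mul_le_mul_of_nonneg_right
          (mul_le_mul_of_nonneg_left (hle.trans hmax) hp.le) ht1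
      nlinarith

/-- master lower bound for `φ(x) = x^γ - 1 - γ(x-1)` via the tangent at the midpoint. -/
lemma phi_lower_master {γ x : ℝ} (hγ : 1 < γ) (hx : 0 ≤ x) :
    γ / 2 * (x - 1) * (((1 + x) / 2) ^ (γ - 1) - 1) ≤ x ^ γ - 1 - γ * (x - 1) := by
  have hm0 : 0 < (1 + x) / 2 := by linarith
  have h1 := tangent_ge hγ.le hx hm0
  have h2 := one_add_mul_self_le_rpow_one_add (s := (1 + x) / 2 - 1) (by linarith) hγ.le
  rw [show (1 : ℝ) + ((1 + x) / 2 - 1) = (1 + x) / 2 by ring] at h2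
  nlinarith [h1, h2]

lemma phi_upper_tangent {γ x : ℝ} (hγ : 1 < γ) (hx : 0 ≤ x) :
    x ^ γ - 1 - γ * (x - 1) ≤ γ * (x - 1) * (x ^ (γ - 1) - 1) := by
  rcases eq_or_lt_of_le hx with h0 | h0
  · rw [← h0, Real.zero_rpow (by positivity : γ ≠ 0),
      Real.zero_rpow (by intro h; linarith : γ - 1 ≠ 0)]
    ring_nf
    nlinarith
  · have h := tangent_ge hγ.le zero_le_one h0
    rw [Real.one_rpow] at h
    nlinarith

lemma phi_quad_lower {γ N x : ℝ} (hγ : 1 < γ) (hN : 1 ≤ N) (hx : 0 ≤ x) (hxN : x ≤ N) :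
    γ * (γ - 1) / 4 * min 1 (min (((1:ℝ)/2) ^ (γ - 2)) (((1 + N) / 2) ^ (γ - 2))) * (x - 1) ^ 2
      ≤ x ^ γ - 1 - γ * (x - 1) := by
  have hq : 0 < γ - 1 := by linarith
  have hmaster := phi_lower_master hγ hx
  have hc0 : (0:ℝ) ≤ γ * (γ - 1) / 4 :=
    div_nonneg (mul_nonneg (by linarith) (by linarith)) (by norm_num)
  rcases le_total x 1 with hx1 | hx1
  · have hlip := (lip_le hq (by norm_num : (0:ℝ) < 1/2) (by linarith : (1:ℝ)/2 ≤ (1+x)/2)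
      (by linarith : (1+x)/2 ≤ 1)).1
    rw [show γ - 1 - 1 = γ - 2 by ring] at hlip
    have hμ1 : min 1 (min (((1:ℝ)/2) ^ (γ - 2)) (((1 + N) / 2) ^ (γ - 2)))
        ≤ min 1 (((1:ℝ)/2) ^ (γ - 2)) :=
      le_min (min_le_left _ _) ((min_le_right _ _).trans (min_le_left _ _))
    have hstep := mul_le_mul_of_nonneg_left hlip
      (mul_nonneg (by linarith : (0:ℝ) ≤ γ / 2) (by linarith : (0:ℝ) ≤ 1 - x))
    have hμstep := mul_le_mul_of_nonneg_right
      (mul_le_mul_of_nonneg_left hμ1 hc0) (sq_nonneg (x - 1))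
    nlinarith [hmaster, hstep, hμstep]
  · have hlip := (lip_ge hq (by linarith : (1:ℝ) ≤ (1+x)/2)
      (by linarith : (1+x)/2 ≤ (1+N)/2)).1
    rw [show γ - 1 - 1 = γ - 2 by ring] at hlip
    have hμ1 : min 1 (min (((1:ℝ)/2) ^ (γ - 2)) (((1 + N) / 2) ^ (γ - 2)))
        ≤ min 1 ((((1:ℝ) + N)/2) ^ (γ - 2)) :=
      le_min (min_le_left _ _) ((min_le_right _ _).trans (min_le_right _ _))
    have hstep := mul_le_mul_of_nonneg_left hlip
      (mul_nonneg (by linarith : (0:ℝ) ≤ γ / 2) (by linarith : (0:ℝ) ≤ x - 1))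
    have hμstep := mul_le_mul_of_nonneg_right
      (mul_le_mul_of_nonneg_left hμ1 hc0) (sq_nonneg (x - 1))
    nlinarith [hmaster, hstep, hμstep]

lemma phi_quad_upper {γ N x : ℝ} (hγ : 1 < γ) (hx : 0 ≤ x) (hxN : x ≤ N) :
    x ^ γ - 1 - γ * (x - 1)
      ≤ (γ * (γ - 1) * max 1 (max (((1:ℝ)/2) ^ (γ - 2)) (N ^ (γ - 2))) + 4 * γ) * (x - 1) ^ 2 := by
  have hq : 0 < γ - 1 := by linarith
  have hΛ0 : (0:ℝ) ≤ max 1 (max (((1:ℝ)/2) ^ (γ - 2)) (N ^ (γ - 2))) :=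
    zero_le_one.trans (le_max_left _ _)
  have hA0 : (0:ℝ) ≤ γ * (γ - 1) * max 1 (max (((1:ℝ)/2) ^ (γ - 2)) (N ^ (γ - 2))) :=
    mul_nonneg (mul_nonneg (by linarith) (by linarith)) hΛ0
  rcases le_total x (1/2) with hhalf | hhalf
  · have hxγ : x ^ γ ≤ 1 := Real.rpow_le_one hx (by linarith) (by linarith)
    have h14 : (1:ℝ)/4 ≤ (x - 1) ^ 2 := by nlinarith
    have e1 : γ * (1/4) ≤ γ * (x - 1) ^ 2 := mul_le_mul_of_nonneg_left h14 (by linarith)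
    have e2 := mul_le_mul_of_nonneg_right hA0 (sq_nonneg (x - 1))
    nlinarith
  · rcases le_total x 1 with hx1 | hx1
    · have htan := phi_upper_tangent hγ hx
      have hlip := (lip_le hq (by norm_num : (0:ℝ) < 1/2) hhalf hx1).2
      rw [show γ - 1 - 1 = γ - 2 by ring] at hlip
      have hstep := mul_le_mul_of_nonneg_left hlip
        (mul_nonneg (by linarith : (0:ℝ) ≤ γ) (by linarith : (0:ℝ) ≤ 1 - x))
      have hΛ : max 1 (((1:ℝ)/2) ^ (γ - 2))
          ≤ max 1 (max (((1:ℝ)/2) ^ (γ - 2)) (N ^ (γ - 2))) :=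
        max_le_max le_rfl (le_max_left _ _)
      have hmono := mul_le_mul_of_nonneg_right
        (mul_le_mul_of_nonneg_left hΛ
          (mul_nonneg (by linarith : (0:ℝ) ≤ γ) (by linarith : (0:ℝ) ≤ γ - 1)))
        (sq_nonneg (x - 1))
      nlinarith [mul_nonneg (by linarith : (0:ℝ) ≤ 4*γ) (sq_nonneg (x-1))]
    · have htan := phi_upper_tangent hγ hx
      have hlip := (lip_ge hq hx1 hxN).2
      rw [show γ - 1 - 1 = γ - 2 by ring] at hlip
      have hstep := mul_le_mul_of_nonneg_left hlip
        (mul_nonneg (by linarith : (0:ℝ) ≤ γ) (by linarith : (0:ℝ) ≤ x - 1))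
      have hΛ : max 1 (N ^ (γ - 2))
          ≤ max 1 (max (((1:ℝ)/2) ^ (γ - 2)) (N ^ (γ - 2))) :=
        max_le_max le_rfl (le_max_right _ _)
      have hmono := mul_le_mul_of_nonneg_right
        (mul_le_mul_of_nonneg_left hΛ
          (mul_nonneg (by linarith : (0:ℝ) ≤ γ) (by linarith : (0:ℝ) ≤ γ - 1)))
        (sq_nonneg (x - 1))
      nlinarith [mul_nonneg (by linarith : (0:ℝ) ≤ 4*γ) (sq_nonneg (x-1))]

lemma relH_eq {a₀ γ ρ r : ℝ} (hγ : 1 < γ) (hρ : 0 ≤ ρ) (hr : 0 < r) :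
    relH a₀ γ ρ r = a₀ / (γ - 1) * (r ^ γ * ((ρ/r) ^ γ - 1 - γ * (ρ/r - 1))) := by
  have hq : γ - 1 ≠ 0 := by intro h; linarith
  have hrr : r ^ (γ - 1) = r ^ γ / r := by rw [Real.rpow_sub hr, Real.rpow_one]
  simp only [relH, Hfun, Hder]
  rw [Real.div_rpow hρ hr.le, hrr]
  have hr' : r ≠ 0 := hr.ne'
  field_simp

end Aux

set_option maxHeartbeats 2000000 in
/-- two-sided comparison of the relative entropy with `|ρ-r|²`
(when `|ρ-r| ≤ 1`) and `|ρ-r|^γ` (when `|ρ-r| ≥ 1`), uniformly for `r ∈ [m, M]`. -/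
theorem relH_equiv (a₀ γ m M : ℝ) (ha : 0 < a₀) (hγ : 1 < γ) (hm : 0 < m) (hmM : m ≤ M) :
    ∃ c C : ℝ, 0 < c ∧ c ≤ C ∧
      ∀ r ρ : ℝ, r ∈ Set.Icc m M → 0 ≤ ρ →
        ((|ρ - r| ≤ 1 →
            c * |ρ - r| ^ 2 ≤ relH a₀ γ ρ r ∧ relH a₀ γ ρ r ≤ C * |ρ - r| ^ 2) ∧
         (1 ≤ |ρ - r| →
            c * |ρ - r| ^ γ ≤ relH a₀ γ ρ r ∧ relH a₀ γ ρ r ≤ C * |ρ - r| ^ γ)) := by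
  have hq : 0 < γ - 1 := by linarith
  have hγ0 : (0:ℝ) < γ := by linarith
  have hM0 : 0 < M := hm.trans_le hmM
  have hB : 0 < a₀ / (γ - 1) := div_pos ha hq
  set B := a₀ / (γ - 1) with hBdef
  set M' : ℝ := max M 1 with hM'def
  have hM'1 : (1:ℝ) ≤ M' := le_max_right _ _
  have hM'0 : (0:ℝ) < M' := by linarith
  have hMM' : M ≤ M' := le_max_left _ _
  set T : ℝ := (2*γ) ^ (1/(γ-1)) + 2 + M' with hTdef
  have hpow0 : (0:ℝ) ≤ (2*γ) ^ (1/(γ-1)) := Real.rpow_nonneg (by linarith) _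
  have hT2 : (2:ℝ) ≤ T := by rw [hTdef]; linarith
  set N : ℝ := 1 + 1/m + T with hNdef
  have hm1 : (0:ℝ) < 1/m := by positivity
  have hKN : 1 + 1/m ≤ N := by rw [hNdef]; linarith
  have hTN : T ≤ N := by rw [hNdef]; linarith
  have hN1 : (1:ℝ) ≤ N := by rw [hNdef]; linarith
  set cq : ℝ := γ * (γ - 1) / 4 *
    min 1 (min (((1:ℝ)/2) ^ (γ - 2)) (((1 + N) / 2) ^ (γ - 2))) with hcqdef
  set Cq : ℝ := γ * (γ - 1) * max 1 (max (((1:ℝ)/2) ^ (γ - 2)) (N ^ (γ - 2))) + 4 * γ with hCqdef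
  have hcq : 0 < cq := by
    rw [hcqdef]
    apply mul_pos (by positivity)
    exact lt_min one_pos (lt_min (Real.rpow_pos_of_pos (by norm_num) _)
      (Real.rpow_pos_of_pos (by linarith) _))
  have hCq0 : 0 ≤ Cq := by
    rw [hCqdef]
    have h1 : (0:ℝ) ≤ max 1 (max (((1:ℝ)/2) ^ (γ - 2)) (N ^ (γ - 2))) :=
      zero_le_one.trans (le_max_left _ _)
    have := mul_nonneg (mul_nonneg hγ0.le hq.le) h1
    linarith
  set e₁ : ℝ := min (m ^ (γ-2)) (M ^ (γ-2)) with he₁def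
  set e₂ : ℝ := max (m ^ (γ-2)) (M ^ (γ-2)) with he₂def
  have he₁ : 0 < e₁ := by
    rw [he₁def]
    exact lt_min (Real.rpow_pos_of_pos hm _) (Real.rpow_pos_of_pos hM0 _)
  have he₂0 : 0 ≤ e₂ := by
    rw [he₂def]
    exact le_trans (Real.rpow_pos_of_pos hm _).le (le_max_left _ _)
  set E : ℝ := max ((1/M) ^ (γ-2)) ((T-1) ^ (γ-2)) with hEdef
  have hE : 0 < E := by
    rw [hEdef]
    exact lt_of_lt_of_le (Real.rpow_pos_of_pos (by positivity) _) (le_max_left _ _)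
  have hM'inv1 : 1/M' ≤ 1 := by rw [div_le_one hM'0]; exact hM'1
  have hM'inv0 : 0 < 1/M' := by positivity
  set c₃ : ℝ := γ/2 * (1/M') * (1 - (1 - 1/M'/2) ^ (γ-1)) with hc₃def
  have hbase0 : (0:ℝ) ≤ 1 - 1/M'/2 := by linarith
  have hbase1 : 1 - 1/M'/2 < 1 := by linarith
  have hc₃ : 0 < c₃ := by
    rw [hc₃def]
    have := Real.rpow_lt_one hbase0 hbase1 hq
    apply mul_pos (mul_pos (by linarith) hM'inv0) (by linarith)
  set cL : ℝ := min (min (B * (cq * e₁)) (B * (cq / E))) (min (B / 2) (B * c₃)) with hcLdef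
  have hcL : 0 < cL := by
    rw [hcLdef]
    exact lt_min (lt_min (mul_pos hB (mul_pos hcq he₁)) (mul_pos hB (div_pos hcq hE)))
      (lt_min (by linarith) (mul_pos hB hc₃))
  set CU : ℝ := B * (Cq * e₂) + B * (1 + M) ^ γ + B * (γ * M' ^ γ) + cL with hCUdef
  have hBCq : 0 ≤ B * (Cq * e₂) := mul_nonneg hB.le (mul_nonneg hCq0 he₂0)
  have hBM : 0 ≤ B * (1 + M) ^ γ := mul_nonneg hB.le (Real.rpow_nonneg (by linarith) _)
  have hBγM : 0 ≤ B * (γ * M' ^ γ) :=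
    mul_nonneg hB.le (mul_nonneg hγ0.le (Real.rpow_nonneg hM'0.le _))
  have hCU0 : cL ≤ CU := by rw [hCUdef]; linarith
  refine ⟨cL, CU, hcL, hCU0, ?_⟩
  rintro r ρ ⟨hmr, hrM⟩ hρ
  have hr0 : 0 < r := hm.trans_le hmr
  set x : ℝ := ρ / r with hxdef
  have hx0 : 0 ≤ x := div_nonneg hρ hr0.le
  have hrx : r * (x - 1) = ρ - r := by rw [hxdef]; field_simp
  have hrγ : 0 < r ^ γ := Real.rpow_pos_of_pos hr0 _
  have hrel : relH a₀ γ ρ r = B * (r ^ γ * (x ^ γ - 1 - γ * (x - 1))) := by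
    rw [hBdef, hxdef]; exact relH_eq hγ hρ hr0
  constructor
  · -- |ρ - r| ≤ 1 : quadratic regime
    intro h1
    obtain ⟨hl, hu⟩ := abs_le.mp h1
    have hρ1 : ρ ≤ r + 1 := by linarith
    have hx1r : x ≤ 1 + 1/m := by
      have h' : (1 + 1/r) * r = r + 1 := by field_simp
      have h'' : x ≤ 1 + 1/r := by rw [hxdef, div_le_iff₀ hr0]; linarith
      have h3 : 1/r ≤ 1/m := one_div_le_one_div_of_le hm hmr
      linarith
    have hxN : x ≤ N := hx1r.trans hKN
    have hql := phi_quad_lower hγ hN1 hx0 hxN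
    rw [← hcqdef] at hql
    have hqu := phi_quad_upper hγ hx0 hxN
    rw [← hCqdef] at hqu
    have hsplit : r ^ γ = r ^ (γ-2) * r ^ 2 := by
      rw [← Real.rpow_natCast r 2, ← Real.rpow_add hr0]
      norm_num
    have hrpow1 : e₁ ≤ r ^ (γ-2) := by rw [he₁def]; exact min_le_rpow' hm hmr hrM
    have hrpow2 : r ^ (γ-2) ≤ e₂ := by rw [he₂def]; exact rpow_le_max' hm hmr hrM
    have habs2 : |ρ - r| ^ 2 = (r * (x-1)) ^ 2 := by rw [← hrx, sq_abs]
    constructor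
    · calc cL * |ρ - r| ^ 2 ≤ B * (cq * e₁) * (r * (x-1)) ^ 2 := by
            rw [habs2]
            exact mul_le_mul_of_nonneg_right
              ((min_le_left _ _).trans (min_le_left _ _)) (sq_nonneg _)
        _ = B * ((e₁ * r ^ 2) * (cq * (x-1) ^ 2)) := by ring
        _ ≤ B * ((r ^ (γ-2) * r ^ 2) * (cq * (x-1) ^ 2)) := by
            apply mul_le_mul_of_nonneg_left _ hB.le
            apply mul_le_mul_of_nonneg_right _ (mul_nonneg hcq.le (sq_nonneg _))
            exact mul_le_mul_of_nonneg_right hrpow1 (sq_nonneg _)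
        _ ≤ B * ((r ^ (γ-2) * r ^ 2) * (x ^ γ - 1 - γ * (x - 1))) := by
            apply mul_le_mul_of_nonneg_left _ hB.le
            apply mul_le_mul_of_nonneg_left hql
            have : 0 < r ^ (γ-2) := Real.rpow_pos_of_pos hr0 _
            positivity
        _ = relH a₀ γ ρ r := by rw [hrel, hsplit]
    · calc relH a₀ γ ρ r = B * ((r ^ (γ-2) * r ^ 2) * (x ^ γ - 1 - γ * (x - 1))) := by
            rw [hrel, hsplit]
        _ ≤ B * ((r ^ (γ-2) * r ^ 2) * (Cq * (x-1) ^ 2)) := by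
            apply mul_le_mul_of_nonneg_left _ hB.le
            apply mul_le_mul_of_nonneg_left hqu
            have : 0 < r ^ (γ-2) := Real.rpow_pos_of_pos hr0 _
            positivity
        _ ≤ B * ((e₂ * r ^ 2) * (Cq * (x-1) ^ 2)) := by
            apply mul_le_mul_of_nonneg_left _ hB.le
            apply mul_le_mul_of_nonneg_right _ (mul_nonneg hCq0 (sq_nonneg _))
            exact mul_le_mul_of_nonneg_right hrpow2 (sq_nonneg _)
        _ = B * (Cq * e₂) * (r * (x-1)) ^ 2 := by ring
        _ = B * (Cq * e₂) * |ρ - r| ^ 2 := by rw [habs2]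
        _ ≤ CU * |ρ - r| ^ 2 := by
            apply mul_le_mul_of_nonneg_right _ (sq_nonneg _)
            rw [hCUdef]; linarith
  · -- 1 ≤ |ρ - r| : power regime
    intro h2
    rcases le_or_gt r ρ with hge | hlt
    · have habs : |ρ - r| = ρ - r := abs_of_nonneg (by linarith)
      rw [habs] at h2 ⊢
      have hrx1 : 1 ≤ r * (x - 1) := by rw [hrx]; linarith
      have hδ : 1/M ≤ x - 1 := by
        have e1 : 1/r ≤ x - 1 := by rw [div_le_iff₀ hr0]; linarith only [hrx1]
        have e3 : 1/M ≤ 1/r := one_div_le_one_div_of_le hr0 hrM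
        linarith
      have hx1 : 0 < x - 1 := lt_of_lt_of_le (by positivity) hδ
      have habsγ : (ρ - r) ^ γ = r ^ γ * (x-1) ^ γ := by
        rw [← hrx, Real.mul_rpow hr0.le (by linarith)]
      have hργ0 : 0 ≤ (ρ - r) ^ γ := Real.rpow_nonneg (by linarith) _
      constructor
      · rcases le_total x T with hxT | hTx
        · -- middle range
          have hxN : x ≤ N := hxT.trans hTN
          have hql := phi_quad_lower hγ hN1 hx0 hxN
          rw [← hcqdef] at hql
          have hEb : (x-1) ^ (γ-2) ≤ E := by
            rw [hEdef]
            exact rpow_le_max' (by positivity) hδ (by linarith)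
          have hsplitx : (x-1) ^ γ = (x-1) ^ (γ-2) * (x-1) ^ 2 := by
            rw [← Real.rpow_natCast (x-1) 2, ← Real.rpow_add hx1]
            norm_num
          have hkey : cq / E * (x-1) ^ γ ≤ cq * (x-1) ^ 2 := by
            have h5 : cq / E * ((x-1) ^ (γ-2) * (x-1) ^ 2) ≤ cq / E * (E * (x-1) ^ 2) := by
              apply mul_le_mul_of_nonneg_left _ (by positivity)
              exact mul_le_mul_of_nonneg_right hEb (sq_nonneg _)
            have h6 : cq / E * (E * (x-1) ^ 2) = cq * (x-1) ^ 2 := by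
              field_simp
            rw [hsplitx]; linarith
          calc cL * (ρ - r) ^ γ ≤ B * (cq / E) * (ρ - r) ^ γ :=
                mul_le_mul_of_nonneg_right
                  ((min_le_left _ _).trans (min_le_right _ _)) hργ0
            _ = B * (r ^ γ * (cq / E * (x-1) ^ γ)) := by rw [habsγ]; ring
            _ ≤ B * (r ^ γ * (cq * (x-1) ^ 2)) := by
                apply mul_le_mul_of_nonneg_left _ hB.le
                exact mul_le_mul_of_nonneg_left hkey hrγ.le
            _ ≤ B * (r ^ γ * (x ^ γ - 1 - γ * (x - 1))) := by
                apply mul_le_mul_of_nonneg_left _ hB.le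
                exact mul_le_mul_of_nonneg_left hql hrγ.le
            _ = relH a₀ γ ρ r := hrel.symm
        · -- far range
          have hTle : (2*γ) ^ (1/(γ-1)) ≤ x := by
            have : (2*γ) ^ (1/(γ-1)) ≤ T := by rw [hTdef]; linarith
            linarith
          have h2γ : 2*γ ≤ x ^ (γ-1) := by
            have h' := Real.rpow_le_rpow (Real.rpow_nonneg (by linarith) _) hTle hq.le
            rwa [← Real.rpow_mul (by linarith : (0:ℝ) ≤ 2*γ), one_div_mul_cancel hq.ne',
              Real.rpow_one] at h'
          have hx0' : 0 < x := by linarith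
          have hxγx : x ^ γ = x ^ (γ-1) * x := by
            rw [← Real.rpow_add_one hx0'.ne' (γ-1)]
            congr 1
            ring
          have hmul := mul_le_mul_of_nonneg_right h2γ hx0'.le
          have hφ : 1/2 * (x-1) ^ γ ≤ x ^ γ - 1 - γ * (x - 1) := by
            have hhalf : 1/2 * x ^ γ ≤ x ^ γ - 1 - γ * (x - 1) := by
              linarith only [hmul, hxγx, hq]
            have hcomp : (x-1) ^ γ ≤ x ^ γ :=
              Real.rpow_le_rpow (by linarith) (by linarith) (by linarith)
            linarith
          calc cL * (ρ - r) ^ γ ≤ B / 2 * (ρ - r) ^ γ :=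
                mul_le_mul_of_nonneg_right
                  ((min_le_right _ _).trans (min_le_left _ _)) hργ0
            _ = B * (r ^ γ * (1/2 * (x-1) ^ γ)) := by rw [habsγ]; ring
            _ ≤ B * (r ^ γ * (x ^ γ - 1 - γ * (x - 1))) := by
                apply mul_le_mul_of_nonneg_left _ hB.le
                exact mul_le_mul_of_nonneg_left hφ hrγ.le
            _ = relH a₀ γ ρ r := hrel.symm
      · -- upper bound, ρ ≥ r
        have hφx : x ^ γ - 1 - γ * (x - 1) ≤ x ^ γ := by
          linarith only [mul_nonneg hγ0.le hx1.le]
        have hxle : x ≤ (1+M) * (x-1) := by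
          have h7 := mul_le_mul_of_nonneg_left hδ hM0.le
          rw [mul_one_div_cancel hM0.ne'] at h7
          linarith only [h7]
        have hxγle : x ^ γ ≤ (1+M) ^ γ * (x-1) ^ γ := by
          rw [← Real.mul_rpow (by linarith : (0:ℝ) ≤ 1+M) (by linarith : (0:ℝ) ≤ x-1)]
          exact Real.rpow_le_rpow hx0 hxle (by linarith)
        calc relH a₀ γ ρ r = B * (r ^ γ * (x ^ γ - 1 - γ * (x - 1))) := hrel
          _ ≤ B * (r ^ γ * ((1+M) ^ γ * (x-1) ^ γ)) := by
              apply mul_le_mul_of_nonneg_left _ hB.le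
              exact mul_le_mul_of_nonneg_left (hφx.trans hxγle) hrγ.le
          _ = B * (1+M) ^ γ * (r ^ γ * (x-1) ^ γ) := by ring
          _ = B * (1+M) ^ γ * (ρ - r) ^ γ := by rw [habsγ]
          _ ≤ CU * (ρ - r) ^ γ := by
              apply mul_le_mul_of_nonneg_right _ hργ0
              rw [hCUdef]; linarith
    · -- ρ < r
      have habs : |ρ - r| = r - ρ := by
        rw [abs_sub_comm, abs_of_nonneg (by linarith)]
      rw [habs] at h2 ⊢
      have hrρ0 : (0:ℝ) ≤ r - ρ := by linarith
      have hrx1 : 1 ≤ r * (1 - x) := by linarith only [hrx, h2]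
      have hrM'' : r ≤ M' := hrM.trans hMM'
      have e1 : 1/r ≤ 1 - x := by rw [div_le_iff₀ hr0]; linarith only [hrx1]
      have h1x : 1/M' ≤ 1 - x := by
        have : 1/M' ≤ 1/r := one_div_le_one_div_of_le hr0 hrM''
        linarith
      have hxlt1 : x ≤ 1 := by linarith
      have hργ0 : 0 ≤ (r - ρ) ^ γ := Real.rpow_nonneg hrρ0 _
      constructor
      · have hmaster := phi_lower_master hγ hx0
        have hbase : (1+x)/2 ≤ 1 - 1/M'/2 := by linarith
        have hmq : ((1+x)/2) ^ (γ-1) ≤ (1 - 1/M'/2) ^ (γ-1) :=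
          Real.rpow_le_rpow (by linarith) hbase hq.le
        have hc2nn : 0 ≤ 1 - (1 - 1/M'/2) ^ (γ-1) := by
          have := Real.rpow_le_one hbase0 hbase1.le hq.le
          linarith
        have hprod : 1/M' * (1 - (1 - 1/M'/2) ^ (γ-1))
            ≤ (1 - x) * (1 - ((1+x)/2) ^ (γ-1)) :=
          mul_le_mul h1x (by linarith) hc2nn (by linarith)
        have hstep := mul_le_mul_of_nonneg_left hprod (by linarith : (0:ℝ) ≤ γ/2)
        have hφ : c₃ ≤ x ^ γ - 1 - γ * (x - 1) := by
          rw [hc₃def]; linarith only [hmaster, hstep]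
        have hrργ : (r - ρ) ^ γ ≤ r ^ γ :=
          Real.rpow_le_rpow hrρ0 (by linarith) (by linarith)
        calc cL * (r - ρ) ^ γ ≤ B * c₃ * (r - ρ) ^ γ :=
              mul_le_mul_of_nonneg_right
                ((min_le_right _ _).trans (min_le_right _ _)) hργ0
          _ ≤ B * c₃ * r ^ γ :=
              mul_le_mul_of_nonneg_left hrργ (mul_nonneg hB.le hc₃.le)
          _ = B * (r ^ γ * c₃) := by ring
          _ ≤ B * (r ^ γ * (x ^ γ - 1 - γ * (x - 1))) := by
              apply mul_le_mul_of_nonneg_left _ hB.le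
              exact mul_le_mul_of_nonneg_left hφ hrγ.le
          _ = relH a₀ γ ρ r := hrel.symm
      · have hxγ1 : x ^ γ ≤ 1 := Real.rpow_le_one hx0 hxlt1 (by linarith)
        have hφγ : x ^ γ - 1 - γ * (x - 1) ≤ γ := by
          linarith only [hxγ1, mul_nonneg hγ0.le hx0]
        have hrM'γ : r ^ γ ≤ M' ^ γ := Real.rpow_le_rpow hr0.le hrM'' (by linarith)
        have h1γ : 1 ≤ (r - ρ) ^ γ := Real.one_le_rpow h2 (by linarith)
        calc relH a₀ γ ρ r = B * (r ^ γ * (x ^ γ - 1 - γ * (x - 1))) := hrel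
          _ ≤ B * (r ^ γ * γ) := by
              apply mul_le_mul_of_nonneg_left _ hB.le
              exact mul_le_mul_of_nonneg_left hφγ hrγ.le
          _ ≤ B * (M' ^ γ * γ) := by
              apply mul_le_mul_of_nonneg_left _ hB.le
              exact mul_le_mul_of_nonneg_right hrM'γ hγ0.le
          _ = B * (γ * M' ^ γ) * 1 := by ring
          _ ≤ B * (γ * M' ^ γ) * (r - ρ) ^ γ :=
              mul_le_mul_of_nonneg_left h1γ hBγM
          _ ≤ CU * (r - ρ) ^ γ := by
              apply mul_le_mul_of_nonneg_right _ hργ0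
              rw [hCUdef]; linarith
end

section
/- Let γ > 1, a₀ > 0, H(ρ) = a₀ρ^γ/(γ-1), and 0 < m ≤ M. There exist constants 0 < c ≤ C (depending only on a₀, γ, m, M) such that for every r ∈ [m, M] and every ρ ≥ 0: c·H(ρ; r) ≤ ρ(H'(ρ) - H'(r)) - r(ρ - r)H''(r) ≤ C·H(ρ; r), where H(ρ; r) = H(ρ) - H(r) - H'(r)(ρ - r) (interpreting ρH'(ρ) as 0 when ρ = 0). -/
noncomputable def Hder2 (a₀ γ r : ℝ) : ℝ := a₀ * γ * r ^ (γ - 2)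
/-- `ρ(H'(ρ) - H'(r)) - r(ρ - r)H''(r)` is comparable to the relative
entropy `H(ρ; r)`, uniformly for `r ∈ [m, M]` and all `ρ ≥ 0`.
(Here `ρ H'(ρ) = a₀ γ ρ^γ/(γ-1)` vanishes at `ρ = 0` since `γ > 1`.) -/
theorem quantity_equiv_relH (a₀ γ m M : ℝ) (ha : 0 < a₀) (hγ : 1 < γ)
    (hm : 0 < m) (hmM : m ≤ M) :
    ∃ c C : ℝ, 0 < c ∧ c ≤ C ∧
      ∀ r ρ : ℝ, r ∈ Set.Icc m M → 0 ≤ ρ →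
        c * relH a₀ γ ρ r ≤
            ρ * (Hder a₀ γ ρ - Hder a₀ γ r) - r * (ρ - r) * Hder2 a₀ γ r ∧
        ρ * (Hder a₀ γ ρ - Hder a₀ γ r) - r * (ρ - r) * Hder2 a₀ γ r ≤
            C * relH a₀ γ ρ r := by
  refine ⟨γ, γ, by linarith, le_refl _, ?_⟩
  intro r ρ hr hρ
  have hr0 : 0 < r := lt_of_lt_of_le hm hr.1
  have hγ0 : γ - 1 ≠ 0 := by intro h; linarith
  have h1 : ρ ^ γ = ρ ^ (γ - 1) * ρ := by
    nth_rewrite 1 [show γ = γ - 1 + 1 by ring]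
    rw [Real.rpow_add' hρ (by linarith), Real.rpow_one]
  have h2 : r ^ (γ - 1) = r ^ (γ - 2) * r := by
    nth_rewrite 1 [show γ - 1 = γ - 2 + 1 by ring]
    rw [Real.rpow_add hr0, Real.rpow_one]
  have h3 : r ^ γ = r ^ (γ - 1) * r := by
    nth_rewrite 1 [show γ = γ - 1 + 1 by ring]
    rw [Real.rpow_add hr0, Real.rpow_one]
  have key : ρ * (Hder a₀ γ ρ - Hder a₀ γ r) - r * (ρ - r) * Hder2 a₀ γ r
      = γ * relH a₀ γ ρ r := by
    simp only [Hder, Hder2, relH, Hfun]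
    rw [h1, h3, h2]
    field_simp
    ring
  exact ⟨le_of_eq key.symm, le_of_eq key⟩
end
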